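/- arXiv:2402.18551 — 4 statements merged into one kernel-verified Lean document; each statement's English description precedes it below -/
import Mathlib

section
/- Let S ⊆ {1,...,V} be nonempty with a proper complement, p supported on S, and u ∈ ℝ^V satisfy conditions (a) and (b) of the previous context with margin parameter γ. Then the cross-entropy -∑_{z∈S} p_z log(softmax(u)_z) is at most H(p) + C·e^{-γ}, where H(p) = -∑_{z∈S} p_z log p_z and C = V. -/
open Real Finset

noncomputable def softmaxFn {V : ℕ} (u : Fin V → ℝ) (v : Fin V) : ℝ :=
  Real.exp (u v) / ∑ v' : Fin V, Real.exp (u v')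

/-- Under the log-odds conditions on in-support logits and margin γ over
out-of-support logits, the cross-entropy exceeds the entropy by at most V e^{-γ}. -/
theorem stmt_5 {V : ℕ} (S : Finset (Fin V)) (hS : S.Nonempty) (hSne : S ≠ Finset.univ)
    (p : Fin V → ℝ) (hp : ∀ z ∈ S, 0 < p z) (hp0 : ∀ v ∉ S, p v = 0)
    (hsum : ∑ z ∈ S, p z = 1)
    (u : Fin V → ℝ) (γ : ℝ)
    (ha : ∀ z ∈ S, ∀ z' ∈ S, u z - u z' = Real.log (p z / p z'))
    (hb : ∀ z ∈ S, ∀ v ∉ S, u z - u v ≥ γ) :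
    -∑ z ∈ S, p z * Real.log (softmaxFn u z) ≤
      (-∑ z ∈ S, p z * Real.log (p z)) + (V : ℝ) * Real.exp (-γ) := by
  obtain ⟨z0, hz0⟩ := hS
  haveI : Nonempty (Fin V) := ⟨z0⟩
  set A : ℝ := ∑ v' : Fin V, Real.exp (u v') with hA
  have hApos : 0 < A := Finset.sum_pos (fun v _ => Real.exp_pos _) ⟨z0, Finset.mem_univ _⟩
  -- pointwise bound
  have key : ∀ z ∈ S, -Real.log (softmaxFn u z) ≤
      -Real.log (p z) + p z * ((V : ℝ) * Real.exp (-γ)) := by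
    intro z hz
    have hpz := hp z hz
    have hBz : A * Real.exp (-(u z)) = ∑ v : Fin V, Real.exp (u v - u z) := by
      rw [hA, Finset.sum_mul]
      congr 1; ext v; rw [← Real.exp_add]; ring_nf
    have hsplit : (∑ v : Fin V, Real.exp (u v - u z)) =
        (∑ v ∈ S, Real.exp (u v - u z)) + ∑ v ∈ Sᶜ, Real.exp (u v - u z) :=
      (Finset.sum_add_sum_compl S _).symm
    have hin : (∑ v ∈ S, Real.exp (u v - u z)) = 1 / p z := by
      have : ∀ v ∈ S, Real.exp (u v - u z) = p v / p z := by
        intro v hv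
        rw [ha v hv z hz, Real.exp_log (div_pos (hp v hv) hpz)]
      rw [Finset.sum_congr rfl this, ← Finset.sum_div, hsum]
    have hout : (∑ v ∈ Sᶜ, Real.exp (u v - u z)) ≤ (V : ℝ) * Real.exp (-γ) := by
      calc (∑ v ∈ Sᶜ, Real.exp (u v - u z))
          ≤ ∑ v ∈ Sᶜ, Real.exp (-γ) := by
            apply Finset.sum_le_sum
            intro v hv
            have := hb z hz v (Finset.mem_compl.mp hv)
            exact Real.exp_le_exp.mpr (by linarith)
        _ = (Sᶜ.card : ℝ) * Real.exp (-γ) := by rw [Finset.sum_const, nsmul_eq_mul]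
        _ ≤ (V : ℝ) * Real.exp (-γ) := by
            apply mul_le_mul_of_nonneg_right _ (Real.exp_pos _).le
            exact_mod_cast (Finset.card_le_card (Finset.subset_univ _)).trans_eq
              (by simp)
    have hbound : A * Real.exp (-(u z)) ≤ 1 / p z + (V : ℝ) * Real.exp (-γ) := by
      rw [hBz, hsplit, hin]; linarith
    have hlogS : Real.log (softmaxFn u z) = u z - Real.log A := by
      unfold softmaxFn
      rw [← hA, Real.log_div (Real.exp_ne_zero _) (ne_of_gt hApos), Real.log_exp]
    have hABpos : 0 < A * Real.exp (-(u z)) := mul_pos hApos (Real.exp_pos _)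
    have h1 : -Real.log (softmaxFn u z) = Real.log (A * Real.exp (-(u z))) := by
      rw [hlogS, Real.log_mul (ne_of_gt hApos) (Real.exp_ne_zero _), Real.log_exp]; ring
    have h2 : Real.log (A * Real.exp (-(u z))) ≤
        Real.log (1 / p z + (V : ℝ) * Real.exp (-γ)) :=
      Real.log_le_log hABpos hbound
    have hfac : 1 / p z + (V : ℝ) * Real.exp (-γ) =
        (1 / p z) * (1 + p z * ((V : ℝ) * Real.exp (-γ))) := by
      field_simp
    have h3 : Real.log (1 / p z + (V : ℝ) * Real.exp (-γ)) ≤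
        -Real.log (p z) + p z * ((V : ℝ) * Real.exp (-γ)) := by
      rw [hfac, Real.log_mul (by positivity) (by positivity), Real.log_div one_ne_zero
        (ne_of_gt hpz), Real.log_one]
      have : Real.log (1 + p z * ((V : ℝ) * Real.exp (-γ))) ≤
          p z * ((V : ℝ) * Real.exp (-γ)) := by
        have := Real.log_le_sub_one_of_pos
          (show (0:ℝ) < 1 + p z * ((V : ℝ) * Real.exp (-γ)) by positivity)
        linarith
      linarith
    linarith [h1, h2, h3]
  -- sum up
  have hple : ∀ z ∈ S, p z ≤ 1 := by
    intro z hz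
    rw [← hsum]
    exact Finset.single_le_sum (fun i hi => (hp i hi).le) hz
  have hsum2 : ∑ z ∈ S, p z * (p z * ((V : ℝ) * Real.exp (-γ))) ≤
      (V : ℝ) * Real.exp (-γ) := by
    calc ∑ z ∈ S, p z * (p z * ((V : ℝ) * Real.exp (-γ)))
        ≤ ∑ z ∈ S, p z * ((V : ℝ) * Real.exp (-γ)) := by
          apply Finset.sum_le_sum
          intro z hz
          have h0 := hp z hz
          have h1 := hple z hz
          have hc : 0 ≤ (V : ℝ) * Real.exp (-γ) := by positivity
          nlinarith [mul_nonneg (mul_nonneg (sub_nonneg.mpr h1) h0.le) hc]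
      _ = (V : ℝ) * Real.exp (-γ) := by rw [← Finset.sum_mul, hsum, one_mul]
  have main : ∑ z ∈ S, p z * (-Real.log (softmaxFn u z)) ≤
      ∑ z ∈ S, p z * (-Real.log (p z) + p z * ((V : ℝ) * Real.exp (-γ))) := by
    apply Finset.sum_le_sum
    intro z hz
    exact mul_le_mul_of_nonneg_left (key z hz) (hp z hz).le
  simp only [mul_add, Finset.sum_add_distrib] at main
  have e1 : ∑ z ∈ S, p z * -Real.log (softmaxFn u z) =
      -∑ z ∈ S, p z * Real.log (softmaxFn u z) := by
    rw [← Finset.sum_neg_distrib]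
    exact Finset.sum_congr rfl fun _ _ => mul_neg _ _
  have e2 : ∑ z ∈ S, p z * -Real.log (p z) = -∑ z ∈ S, p z * Real.log (p z) := by
    rw [← Finset.sum_neg_distrib]
    exact Finset.sum_congr rfl fun _ _ => mul_neg _ _
  rw [e1, e2] at main
  linarith [hsum2, main]
end

section
/- Suppose training data consist of m distinct contexts with embeddings h_1,...,h_m ∈ ℝ^d, weights π_j > 0 summing to 1, and next-token probability vectors p_j supported on S_j ⊆ {1,...,V}. If there exist matrices W^p and W^d in ℝ^{V×d} with (e_z - e_{z'})^T W^p h_j = log(p_{j,z}/p_{j,z'}) for all j and z,z' ∈ S_j, and (e_z - e_{z'})^T W^d h_j = 0 for z,z' ∈ S_j while (e_z - e_v)^T W^d h_j ≥ 1 for z ∈ S_j, v ∉ S_j, then CE(W^p + γ W^d) → H as γ → ∞, where CE(W) = -∑_j π_j ∑_{z∈S_j} p_{j,z} log softmax(W h_j)_z and H = -∑_j π_j ∑_{z∈S_j} p_{j,z} log p_{j,z}. -/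
open Real Finset Filter

/-- If the data are NTP-entropy-compatible (via W^p) and NTP-separable (via W^d),
then CE(W^p + γ W^d) tends to the empirical entropy H as γ → ∞. -/
theorem stmt_6 {V d m : ℕ}
    (h : Fin m → Fin d → ℝ) (pri : Fin m → ℝ) (hpri : ∀ j, 0 < pri j)
    (hprisum : ∑ j, pri j = 1)
    (S : Fin m → Finset (Fin V))
    (p : Fin m → Fin V → ℝ)
    (hp : ∀ j, ∀ z ∈ S j, 0 < p j z) (hp0 : ∀ j, ∀ v ∉ S j, p j v = 0)
    (hpsum : ∀ j, ∑ z ∈ S j, p j z = 1)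
    (Wp Wd : Fin V → Fin d → ℝ)
    (hWp : ∀ j, ∀ z ∈ S j, ∀ z' ∈ S j,
      (∑ i, Wp z i * h j i) - (∑ i, Wp z' i * h j i) = Real.log (p j z / p j z'))
    (hWd_eq : ∀ j, ∀ z ∈ S j, ∀ z' ∈ S j,
      (∑ i, Wd z i * h j i) - (∑ i, Wd z' i * h j i) = 0)
    (hWd_ge : ∀ j, ∀ z ∈ S j, ∀ v ∉ S j,
      (∑ i, Wd z i * h j i) - (∑ i, Wd v i * h j i) ≥ 1) :
    Tendsto
      (fun γ : ℝ =>
        -∑ j, pri j * ∑ z ∈ S j, p j z *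
          Real.log (softmaxFn (fun v => ∑ i, (Wp v i + γ * Wd v i) * h j i) z))
      atTop
      (nhds (-∑ j, pri j * ∑ z ∈ S j, p j z * Real.log (p j z))) := by
  have key : ∀ j : Fin m, ∀ z ∈ S j,
      Tendsto (fun γ : ℝ =>
          Real.log (softmaxFn (fun v => ∑ i, (Wp v i + γ * Wd v i) * h j i) z))
        atTop (nhds (Real.log (p j z))) := by
    intro j z hz
    set A : Fin V → ℝ := fun v => ∑ i, Wp v i * h j i with hA
    set B : Fin V → ℝ := fun v => ∑ i, Wd v i * h j i with hB
    have hu : ∀ γ : ℝ, ∀ v, (∑ i, (Wp v i + γ * Wd v i) * h j i) = A v + γ * B v := by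
      intro γ v
      simp only [hA, hB, Finset.mul_sum]
      rw [← Finset.sum_add_distrib]
      exact Finset.sum_congr rfl fun i _ => by ring
    have hpz := hp j z hz
    have hsm : ∀ γ : ℝ,
        softmaxFn (fun v => ∑ i, (Wp v i + γ * Wd v i) * h j i) z
          = ((p j z)⁻¹ + ∑ v ∈ (S j)ᶜ, Real.exp ((A v - A z) + γ * (B v - B z)))⁻¹ := by
      intro γ
      have hsum : ∑ v : Fin V, Real.exp ((A v + γ * B v) - (A z + γ * B z))
          = (p j z)⁻¹ + ∑ v ∈ (S j)ᶜ, Real.exp ((A v - A z) + γ * (B v - B z)) := by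
        rw [← Finset.sum_add_sum_compl (S j)]
        congr 1
        · have hterm : ∀ v ∈ S j,
              Real.exp ((A v + γ * B v) - (A z + γ * B z)) = p j v / p j z := by
            intro v hv
            have h1 : A v - A z = Real.log (p j v / p j z) := hWp j v hv z hz
            have h2 : B v - B z = 0 := hWd_eq j v hv z hz
            have h3 : (A v + γ * B v) - (A z + γ * B z) = Real.log (p j v / p j z) := by
              have hB2 : B v = B z := by linarith
              rw [← h1, hB2]; ring
            rw [h3, Real.exp_log (div_pos (hp j v hv) hpz)]
          rw [Finset.sum_congr rfl hterm, ← Finset.sum_div, hpsum j, one_div]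
        · exact Finset.sum_congr rfl fun v _ => by ring_nf
      have hdiv : ∑ v : Fin V, Real.exp ((A v + γ * B v) - (A z + γ * B z))
          = (∑ v : Fin V, Real.exp (A v + γ * B v)) / Real.exp (A z + γ * B z) := by
        simp [Real.exp_sub, Finset.sum_div]
      simp only [softmaxFn, hu γ]
      rw [← hsum, hdiv, inv_div]
    have hT : Tendsto
        (fun γ : ℝ => ∑ v ∈ (S j)ᶜ, Real.exp ((A v - A z) + γ * (B v - B z)))
        atTop (nhds 0) := by
      have h0 : (0:ℝ) = ∑ v ∈ (S j)ᶜ, (0:ℝ) := by simp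
      rw [h0]
      refine tendsto_finset_sum _ fun v hv => ?_
      have hvS : v ∉ S j := by simpa using hv
      have hle : B v - B z < 0 := by
        have := hWd_ge j z hz v hvS; simp only [hA, hB] at *; linarith
      have h1 : Tendsto (fun γ : ℝ => (A v - A z) + γ * (B v - B z)) atTop atBot := by
        apply tendsto_atBot_add_const_left
        exact Tendsto.atTop_mul_const_of_neg hle tendsto_id
      exact Real.tendsto_exp_atBot.comp h1
    have h2 : Tendsto
        (fun γ : ℝ => ((p j z)⁻¹ + ∑ v ∈ (S j)ᶜ, Real.exp ((A v - A z) + γ * (B v - B z)))⁻¹)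
        atTop (nhds (p j z)) := by
      have h3 : Tendsto
          (fun γ : ℝ => (p j z)⁻¹ + ∑ v ∈ (S j)ᶜ, Real.exp ((A v - A z) + γ * (B v - B z)))
          atTop (nhds ((p j z)⁻¹)) := by
        simpa using tendsto_const_nhds.add hT
      simpa using h3.inv₀ (by positivity)
    have h4 := h2.log (ne_of_gt hpz)
    exact h4.congr fun γ => by rw [hsm γ]
  have main : Tendsto
      (fun γ : ℝ => ∑ j, pri j * ∑ z ∈ S j, p j z *
        Real.log (softmaxFn (fun v => ∑ i, (Wp v i + γ * Wd v i) * h j i) z))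
      atTop (nhds (∑ j, pri j * ∑ z ∈ S j, p j z * Real.log (p j z))) := by
    refine tendsto_finset_sum _ fun j _ => Tendsto.const_mul _ ?_
    exact tendsto_finset_sum _ fun z hz => Tendsto.const_mul _ (key j z hz)
  exact main.neg
end

section
/- Let CE(W) = -∑_j π_j ∑_{z∈S_j} p_{j,z} log softmax(W h_j)_z with π_j > 0 and p_{j,z} > 0 for z ∈ S_j. If W^mm ∈ ℝ^{V×d} satisfies (e_z - e_{z'})^T W^mm h_j = 0 for z, z' ∈ S_j and (e_z - e_v)^T W^mm h_j ≥ 1 for z ∈ S_j, v ∉ S_j, with at least one S_j a proper subset of {1,...,V}, then the directional derivative ⟨-∇CE(W), W^mm⟩ is strictly positive for every W ∈ ℝ^{V×d}. -/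
open Real Finset

/-- The NTP loss as a function of the decoder W (with fixed embeddings h). -/
noncomputable def ntpCE {V d m : ℕ} (h : Fin m → Fin d → ℝ) (pri : Fin m → ℝ)
    (S : Fin m → Finset (Fin V)) (p : Fin m → Fin V → ℝ)
    (W : Fin V → Fin d → ℝ) : ℝ :=
  -∑ j, pri j * ∑ z ∈ S j, p j z *
    Real.log (softmaxFn (fun v => ∑ i, W v i * h j i) z)

lemma Epos {V : ℕ} [Nonempty (Fin V)] (u : Fin V → ℝ) :
    0 < ∑ v : Fin V, Real.exp (u v) :=
  Finset.sum_pos (fun _ _ => Real.exp_pos _) Finset.univ_nonempty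

lemma ntpCE_eq {V d m : ℕ} (h : Fin m → Fin d → ℝ) (pri : Fin m → ℝ)
    (S : Fin m → Finset (Fin V)) (p : Fin m → Fin V → ℝ)
    (W : Fin V → Fin d → ℝ) :
    ntpCE h pri S p W = -∑ j, pri j * ∑ z ∈ S j, p j z *
      ((∑ i, W z i * h j i) -
        Real.log (∑ v' : Fin V, Real.exp (∑ i, W v' i * h j i))) := by
  unfold ntpCE softmaxFn
  congr 1
  apply Finset.sum_congr rfl; intro j _
  congr 1
  apply Finset.sum_congr rfl; intro z hz
  congr 1
  have : Nonempty (Fin V) := ⟨z⟩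
  rw [Real.log_div (Real.exp_ne_zero _) (Epos _).ne', Real.log_exp]

lemma ntpCE_diff {V d m : ℕ} (h : Fin m → Fin d → ℝ) (pri : Fin m → ℝ)
    (S : Fin m → Finset (Fin V)) (p : Fin m → Fin V → ℝ)
    [Nonempty (Fin V)]
    (W : Fin V → Fin d → ℝ) :
    DifferentiableAt ℝ (ntpCE h pri S p) W := by
  have hfun : ntpCE h pri S p = fun W => -∑ j, pri j * ∑ z ∈ S j, p j z *
      ((∑ i, W z i * h j i) -
        Real.log (∑ v' : Fin V, Real.exp (∑ i, W v' i * h j i))) :=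
    funext fun W => ntpCE_eq h pri S p W
  rw [hfun]
  apply DifferentiableAt.neg
  apply DifferentiableAt.fun_sum; intro j _
  apply DifferentiableAt.const_mul
  apply DifferentiableAt.fun_sum; intro z hz
  apply DifferentiableAt.const_mul
  apply DifferentiableAt.sub
  · fun_prop
  · exact DifferentiableAt.log (by fun_prop) (Epos _).ne'

lemma line_deriv {V d m : ℕ} [Nonempty (Fin V)]
    (h : Fin m → Fin d → ℝ) (pri : Fin m → ℝ)
    (S : Fin m → Finset (Fin V)) (p : Fin m → Fin V → ℝ)
    (W Wmm : Fin V → Fin d → ℝ) :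
    HasDerivAt (fun t : ℝ => ntpCE h pri S p (W + t • Wmm))
      (-∑ j, pri j * ∑ z ∈ S j, p j z *
        ((∑ i, Wmm z i * h j i) -
          (∑ v, Real.exp (∑ i, W v i * h j i) * ∑ i, Wmm v i * h j i) /
            (∑ v, Real.exp (∑ i, W v i * h j i)))) 0 := by
  set u : Fin m → Fin V → ℝ := fun j v => ∑ i, W v i * h j i with hu
  set a : Fin m → Fin V → ℝ := fun j v => ∑ i, Wmm v i * h j i with ha
  have hkey : ∀ (t : ℝ) (j : Fin m) (v : Fin V),
      (∑ i, (W + t • Wmm) v i * h j i) = u j v + t * a j v := by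
    intro t j v
    simp only [Pi.add_apply, Pi.smul_apply, smul_eq_mul, add_mul,
      Finset.sum_add_distrib, hu, ha, Finset.mul_sum, mul_assoc]
  have hfun : (fun t : ℝ => ntpCE h pri S p (W + t • Wmm)) =
      fun t => -∑ j, pri j * ∑ z ∈ S j, p j z *
        ((u j z + t * a j z) -
          Real.log (∑ v' : Fin V, Real.exp (u j v' + t * a j v'))) := by
    funext t
    rw [ntpCE_eq]
    simp only [hkey]
  rw [hfun]
  apply HasDerivAt.neg
  apply HasDerivAt.fun_sum; intro j _
  apply HasDerivAt.const_mul
  apply HasDerivAt.fun_sum; intro z hz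
  apply HasDerivAt.const_mul
  have H1 : ∀ v : Fin V, HasDerivAt (fun t : ℝ => u j v + t * a j v) (a j v) 0 := by
    intro v
    simpa using ((hasDerivAt_id (0:ℝ)).mul_const (a j v)).const_add (u j v)
  have Hsum : HasDerivAt (fun t : ℝ => ∑ v' : Fin V, Real.exp (u j v' + t * a j v'))
      (∑ v' : Fin V, Real.exp (u j v') * a j v') 0 := by
    apply HasDerivAt.fun_sum; intro v _
    simpa using (H1 v).exp
  have Hlog : HasDerivAt (fun t : ℝ => Real.log (∑ v' : Fin V, Real.exp (u j v' + t * a j v')))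
      ((∑ v' : Fin V, Real.exp (u j v') * a j v') / (∑ v' : Fin V, Real.exp (u j v'))) 0 := by
    have := Hsum.log (x := 0) (by simpa using (Epos (u j)).ne')
    simpa using this
  exact (H1 z).sub Hlog

/-- The directional derivative of CE at any W in the direction of an NTP-SVM
feasible matrix W^mm is strictly negative (i.e. ⟨-∇CE(W), W^mm⟩ > 0). -/
theorem stmt_11 {V d m : ℕ}
    (h : Fin m → Fin d → ℝ) (pri : Fin m → ℝ) (hpri : ∀ j, 0 < pri j)
    (S : Fin m → Finset (Fin V)) (hS : ∀ j, (S j).Nonempty)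
    (hproper : ∃ j, S j ≠ Finset.univ)
    (p : Fin m → Fin V → ℝ) (hp : ∀ j, ∀ z ∈ S j, 0 < p j z)
    (Wmm : Fin V → Fin d → ℝ)
    (hWmm_eq : ∀ j, ∀ z ∈ S j, ∀ z' ∈ S j,
      (∑ i, Wmm z i * h j i) - (∑ i, Wmm z' i * h j i) = 0)
    (hWmm_ge : ∀ j, ∀ z ∈ S j, ∀ v ∉ S j,
      (∑ i, Wmm z i * h j i) - (∑ i, Wmm v i * h j i) ≥ 1) :
    ∀ W : Fin V → Fin d → ℝ,
      fderiv ℝ (ntpCE h pri S p) W Wmm < 0 := by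
  intro W
  obtain ⟨j0, hj0⟩ := hproper
  obtain ⟨z0, hz0⟩ := hS j0
  have : Nonempty (Fin V) := ⟨z0⟩
  -- identify the fderiv applied to Wmm with the line derivative
  have hdiff := ntpCE_diff h pri S p W
  have hline : HasDerivAt (fun t : ℝ => W + t • Wmm) Wmm 0 := by
    simpa using (((hasDerivAt_id (0:ℝ)).smul_const Wmm).const_add W)
  have hcomp : HasDerivAt (fun t : ℝ => ntpCE h pri S p (W + t • Wmm))
      (fderiv ℝ (ntpCE h pri S p) W Wmm) 0 := by
    have h' : HasFDerivAt (ntpCE h pri S p) (fderiv ℝ (ntpCE h pri S p) W)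
        (W + (0:ℝ) • Wmm) := by simpa using hdiff.hasFDerivAt
    exact h'.comp_hasDerivAt 0 hline
  have heq := hcomp.unique (line_deriv h pri S p W Wmm)
  rw [heq]
  -- notation
  set u : Fin m → Fin V → ℝ := fun j v => ∑ i, W v i * h j i with hu
  set a : Fin m → Fin V → ℝ := fun j v => ∑ i, Wmm v i * h j i with ha
  set E : Fin m → ℝ := fun j => ∑ v, Real.exp (u j v) with hE
  have hEpos : ∀ j, 0 < E j := fun j => Epos (u j)
  set D : Fin m → ℝ := fun j => (∑ v, Real.exp (u j v) * a j v) / E j with hD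
  rw [neg_lt_zero]
  -- gap formula
  have hgap : ∀ j z, a j z - D j =
      (∑ v, Real.exp (u j v) * (a j z - a j v)) / E j := by
    intro j z
    rw [eq_div_iff (hEpos j).ne', hD, sub_mul, div_mul_cancel₀ _ (hEpos j).ne']
    rw [hE]
    simp only [mul_sub, Finset.sum_sub_distrib]
    rw [← Finset.sum_mul, mul_comm]
  -- nonnegativity / positivity of numerator
  have hnum : ∀ j, ∀ z ∈ S j,
      (∑ v ∈ (S j)ᶜ, Real.exp (u j v)) ≤ ∑ v, Real.exp (u j v) * (a j z - a j v) := by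
    intro j z hz
    rw [← Finset.sum_add_sum_compl (S j) (fun v => Real.exp (u j v) * (a j z - a j v))]
    have h1 : ∑ v ∈ S j, Real.exp (u j v) * (a j z - a j v) = 0 :=
      Finset.sum_eq_zero fun v hv => by
        rw [ha]; simp only; rw [hWmm_eq j z hz v hv, mul_zero]
    rw [h1, zero_add]
    apply Finset.sum_le_sum
    intro v hv
    have hge := hWmm_ge j z hz v (by simpa using hv)
    exact le_mul_of_one_le_right (Real.exp_pos _).le hge
  have hgap_nonneg : ∀ j, ∀ z ∈ S j, 0 ≤ a j z - D j := by
    intro j z hz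
    rw [hgap j z]
    apply div_nonneg _ (hEpos j).le
    refine le_trans ?_ (hnum j z hz)
    exact Finset.sum_nonneg fun v _ => (Real.exp_pos _).le
  -- inner sums
  have hT_nonneg : ∀ j, 0 ≤ ∑ z ∈ S j, p j z * (a j z - D j) :=
    fun j => Finset.sum_nonneg fun z hz =>
      mul_nonneg (hp j z hz).le (hgap_nonneg j z hz)
  -- strict positivity at j0
  have hcompl : ((S j0)ᶜ : Finset (Fin V)).Nonempty := by
    by_contra hc
    rw [Finset.not_nonempty_iff_eq_empty] at hc
    exact hj0 (by simpa [Finset.eq_univ_iff_forall, Finset.eq_empty_iff_forall_notMem,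
      Finset.mem_compl] using hc)
  have hgap_pos : ∀ z ∈ S j0, 0 < a j0 z - D j0 := by
    intro z hz
    rw [hgap j0 z]
    apply div_pos _ (hEpos j0)
    refine lt_of_lt_of_le ?_ (hnum j0 z hz)
    exact Finset.sum_pos (fun v _ => Real.exp_pos _) hcompl
  have hT0 : 0 < ∑ z ∈ S j0, p j0 z * (a j0 z - D j0) :=
    Finset.sum_pos (fun z hz => mul_pos (hp j0 z hz) (hgap_pos z hz)) ⟨z0, hz0⟩
  exact Finset.sum_pos' (fun j _ => mul_nonneg (hpri j).le (hT_nonneg j))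
    ⟨j0, Finset.mem_univ _, mul_pos (hpri j0) hT0⟩
end

section
/- Let f: ℝ^N → ℝ be convex, differentiable, L-smooth, bounded below with infimum f* that is not attained. Then gradient descent x_{k+1} = x_k - η ∇f(x_k) with step size 0 < η ≤ 1/(2L) satisfies f(x_k) → f* and ‖x_k‖ → ∞. -/
open Real Filter

open Real Filter InnerProductSpace
open scoped RealInnerProductSpace

variable {F : Type*} [NormedAddCommGroup F] [InnerProductSpace ℝ F] [CompleteSpace F]

lemma aux_hasDerivAt {f : F → ℝ} (hdiff : Differentiable ℝ f) (x v : F) (t : ℝ) :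
    HasDerivAt (fun s : ℝ => f (x + s • v)) ⟪gradient f (x + t • v), v⟫_ℝ t := by
  have hc : HasDerivAt (fun s : ℝ => x + s • v) v t := by
    simpa using ((hasDerivAt_id t).smul_const v).const_add x
  have hf := ((hdiff (x + t • v)).hasGradientAt).hasFDerivAt
  have := hf.comp_hasDerivAt t hc
  exact this

lemma aux_descent {f : F → ℝ} (hdiff : Differentiable ℝ f) {L : NNReal}
    (hsmooth : LipschitzWith L (gradient f)) (x v : F) :
    f (x + v) ≤ f x + ⟪gradient f x, v⟫_ℝ + (L : ℝ) / 2 * ‖v‖ ^ 2 := by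
  set H : ℝ → ℝ := fun t => f (x + t • v) - t * ⟪gradient f x, v⟫_ℝ
      - (L : ℝ) / 2 * ‖v‖ ^ 2 * t ^ 2 with hHdef
  have hHd : ∀ t : ℝ, HasDerivAt H
      (⟪gradient f (x + t • v), v⟫_ℝ - ⟪gradient f x, v⟫_ℝ - (L : ℝ) * ‖v‖ ^ 2 * t) t := by
    intro t
    have h1 := aux_hasDerivAt hdiff x v t
    have h2 : HasDerivAt (fun s : ℝ => s * ⟪gradient f x, v⟫_ℝ) ⟪gradient f x, v⟫_ℝ t := by
      simpa using (hasDerivAt_id t).mul_const ⟪gradient f x, v⟫_ℝ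
    have h3 : HasDerivAt (fun s : ℝ => (L : ℝ) / 2 * ‖v‖ ^ 2 * s ^ 2)
        ((L : ℝ) * ‖v‖ ^ 2 * t) t := by
      have := (hasDerivAt_pow 2 t).const_mul ((L : ℝ) / 2 * ‖v‖ ^ 2)
      convert this using 1 <;> try rfl
      ring
    exact (h1.sub h2).sub h3
  have hmono : AntitoneOn H (Set.Icc (0 : ℝ) 1) := by
    apply antitoneOn_of_deriv_nonpos (convex_Icc 0 1)
    · exact fun t _ => (hHd t).continuousAt.continuousWithinAt
    · exact fun t _ => ((hHd t).differentiableAt).differentiableWithinAt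
    · intro t ht
      rw [interior_Icc] at ht
      rw [(hHd t).deriv]
      have hb : ⟪gradient f (x + t • v) - gradient f x, v⟫_ℝ ≤ (L : ℝ) * ‖v‖ ^ 2 * t := by
        calc ⟪gradient f (x + t • v) - gradient f x, v⟫_ℝ
            ≤ ‖gradient f (x + t • v) - gradient f x‖ * ‖v‖ := real_inner_le_norm _ _
          _ ≤ ((L : ℝ) * ‖t • v‖) * ‖v‖ := by
              have := hsmooth.dist_le_mul (x + t • v) x
              rw [dist_eq_norm, dist_eq_norm] at this
              have h' : x + t • v - x = t • v := by abel
              rw [h'] at this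
              exact mul_le_mul_of_nonneg_right this (norm_nonneg _)
          _ = (L : ℝ) * ‖v‖ ^ 2 * |t| := by rw [norm_smul, Real.norm_eq_abs]; ring
          _ = (L : ℝ) * ‖v‖ ^ 2 * t := by rw [abs_of_pos ht.1]
      rw [inner_sub_left] at hb
      linarith
  have h10 := hmono (Set.mem_Icc.2 ⟨le_refl 0, zero_le_one⟩)
      (Set.mem_Icc.2 ⟨zero_le_one, le_refl 1⟩) zero_le_one
  simp only [hHdef, zero_smul, add_zero, one_smul] at h10
  nlinarith [h10]

lemma aux_convex_grad {f : F → ℝ} (hconv : ConvexOn ℝ Set.univ f)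
    (hdiff : Differentiable ℝ f) (x z : F) :
    ⟪gradient f x, z - x⟫_ℝ ≤ f z - f x := by
  set g : ℝ → ℝ := fun t => f (x + t • (z - x)) with hgdef
  have hg : ConvexOn ℝ Set.univ g := by
    have := hconv.comp_affineMap (AffineMap.lineMap x z)
    simp only [Set.preimage_univ] at this
    convert this using 1 <;> try rfl
    funext t
    simp [hgdef, AffineMap.lineMap_apply_module', add_comm]
  have hd : HasDerivAt g ⟪gradient f x, z - x⟫_ℝ 0 := by
    have := aux_hasDerivAt hdiff x (z - x) 0
    simpa using this
  have := hg.le_slope_of_hasDerivAt (Set.mem_univ (0:ℝ)) (Set.mem_univ (1:ℝ)) one_pos hd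
  rw [slope_def_field] at this
  simpa [hgdef] using this

lemma aux_grad_sq {f : F → ℝ} (hdiff : Differentiable ℝ f) {L : NNReal} (hL : 0 < L)
    (hsmooth : LipschitzWith L (gradient f)) {fstar : ℝ}
    (hlb : ∀ y, fstar ≤ f y) (x : F) :
    ‖gradient f x‖ ^ 2 ≤ 2 * (L : ℝ) * (f x - fstar) := by
  have hLpos : (0:ℝ) < L := hL
  have h := aux_descent hdiff hsmooth x (-(1 / (L:ℝ)) • gradient f x)
  rw [real_inner_smul_right, norm_smul, real_inner_self_eq_norm_sq] at h
  have hlb' := hlb (x + -(1 / (L:ℝ)) • gradient f x)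
  have hnn : (0:ℝ) ≤ ‖gradient f x‖ ^ 2 := sq_nonneg _
  rw [Real.norm_eq_abs, mul_pow, sq_abs] at h
  have : f (x + -(1 / (L:ℝ)) • gradient f x) ≤ f x - 1 / (2 * (L:ℝ)) * ‖gradient f x‖ ^ 2 := by
    have e1 : (L : ℝ) / 2 * ((-(1 / (L:ℝ))) ^ 2 * ‖gradient f x‖ ^ 2)
        = 1 / (2 * (L:ℝ)) * ‖gradient f x‖ ^ 2 := by field_simp
    have e2 : -(1 / (L:ℝ)) * ‖gradient f x‖ ^ 2 + 1 / (2 * (L:ℝ)) * ‖gradient f x‖ ^ 2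
        = -(1 / (2 * (L:ℝ)) * ‖gradient f x‖ ^ 2) := by field_simp; ring
    linarith [h, e1, e2]
  have h2 := le_trans hlb' this
  have h3 : ‖gradient f x‖ ^ 2 = 2 * (L:ℝ) * (1 / (2 * (L:ℝ)) * ‖gradient f x‖ ^ 2) := by
    field_simp
  rw [h3]
  exact mul_le_mul_of_nonneg_left (by linarith [h2]) (by positivity)


/-- Norm growth: for a smooth convex function whose infimum is not attained,
gradient descent drives the objective to the infimum while the iterates diverge
in norm. -/
theorem stmt_15 {N : ℕ}
    (f : EuclideanSpace ℝ (Fin N) → ℝ)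
    (hconv : ConvexOn ℝ Set.univ f)
    (hdiff : Differentiable ℝ f)
    (L : NNReal) (hL : 0 < L)
    (hsmooth : LipschitzWith L (gradient f))
    (fstar : ℝ) (hglb : IsGLB (Set.range f) fstar)
    (hnotatt : ∀ x, fstar < f x)
    (η : ℝ) (hη0 : 0 < η) (hη : η ≤ 1 / (2 * L))
    (x : ℕ → EuclideanSpace ℝ (Fin N))
    (hx : ∀ k, x (k + 1) = x k - η • gradient f (x k)) :
    Tendsto (fun k => f (x k)) atTop (nhds fstar) ∧
    Tendsto (fun k => ‖x k‖) atTop atTop := by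
  have hLpos : (0:ℝ) < L := hL
  have hlb : ∀ y, fstar ≤ f y := fun y => hglb.1 (Set.mem_range_self y)
  have h2Lη : 2 * (L:ℝ) * η ≤ 1 := by
    rw [le_div_iff₀ (by positivity : (0:ℝ) < 2 * L)] at hη
    linarith
  -- the key one-step inequality relative to any comparison point z
  have hstep : ∀ k (z : EuclideanSpace ℝ (Fin N)),
      ‖x (k+1) - z‖^2 ≤ ‖x k - z‖^2 - η * (f (x k) - fstar) + 2*η*(f z - fstar) := by
    intro k z
    have hconvi := aux_convex_grad hconv hdiff (x k) z
    have hgs := aux_grad_sq hdiff hL hsmooth hlb (x k)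
    have hexp : ‖x (k+1) - z‖^2 = ‖x k - z‖^2
        - 2*η*⟪x k - z, gradient f (x k)⟫_ℝ + η^2 * ‖gradient f (x k)‖^2 := by
      rw [hx k]
      have e : x k - η • gradient f (x k) - z = (x k - z) - η • gradient f (x k) := by abel
      rw [e, norm_sub_sq_real, real_inner_smul_right, norm_smul]
      rw [Real.norm_eq_abs, mul_pow, sq_abs]
      ring
    have hiner : f (x k) - f z ≤ ⟪x k - z, gradient f (x k)⟫_ℝ := by
      have : ⟪gradient f (x k), z - x k⟫_ℝ = - ⟪x k - z, gradient f (x k)⟫_ℝ := by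
        rw [real_inner_comm]
        have : z - x k = -(x k - z) := by abel
        rw [this, inner_neg_left]
      linarith [hconvi, this.symm.le, this.le]
    have hsq : η^2 * ‖gradient f (x k)‖^2 ≤ η * (f (x k) - fstar) := by
      have h1 : η^2 * ‖gradient f (x k)‖^2 ≤ η^2 * (2 * (L:ℝ) * (f (x k) - fstar)) :=
        mul_le_mul_of_nonneg_left hgs (by positivity)
      have h2 : η^2 * (2 * (L:ℝ) * (f (x k) - fstar)) ≤ η * (f (x k) - fstar) := by
        have hfnn : 0 ≤ f (x k) - fstar := by linarith [hlb (x k)]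
        nlinarith [hfnn, hη0, h2Lη,
          mul_le_mul_of_nonneg_right h2Lη (mul_nonneg hη0.le hfnn)]
      linarith
    rw [hexp]
    nlinarith [hiner, hsq, hη0]
  -- monotone decrease of the objective values
  have hdec : ∀ k, f (x (k+1)) ≤ f (x k) := by
    intro k
    have hd := aux_descent hdiff hsmooth (x k) (-η • gradient f (x k))
    have e : x k + -η • gradient f (x k) = x (k+1) := by
      rw [hx k]; module
    rw [e, real_inner_smul_right, real_inner_self_eq_norm_sq, norm_smul,
      Real.norm_eq_abs, mul_pow, sq_abs] at hd
    have hq : (L:ℝ)/2 * (-η)^2 ≤ η/4 := by nlinarith [mul_le_mul_of_nonneg_right h2Lη hη0.le]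
    nlinarith [hd, sq_nonneg ‖gradient f (x k)‖, hη0,
      mul_le_mul_of_nonneg_right hq (sq_nonneg ‖gradient f (x k)‖)]
  have hmono : ∀ j k, j ≤ k → f (x k) ≤ f (x j) := by
    intro j k hjk
    exact antitone_nat_of_succ_le (f := fun n => f (x n)) hdec hjk
  -- key claim: objective gets below fstar + ε for some index
  have hkey : ∀ ε : ℝ, 0 < ε → ∃ K, f (x K) < fstar + ε := by
    intro ε hε
    by_contra hno
    push_neg at hno
    obtain ⟨z, hz⟩ : ∃ z, f z < fstar + ε/4 := by
      by_contra hz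
      push_neg at hz
      have : fstar + ε/4 ≤ fstar := hglb.2 (by rintro _ ⟨y, rfl⟩; exact hz y)
      linarith
    have hdrop : ∀ k, ‖x (k+1) - z‖^2 ≤ ‖x k - z‖^2 - η * ε / 2 := by
      intro k
      have := hstep k z
      have h1 := hno k
      nlinarith [this, hη0, hz, h1]
    have hind : ∀ n : ℕ, ‖x n - z‖^2 ≤ ‖x 0 - z‖^2 - n * (η * ε / 2) := by
      intro n
      induction n with
      | zero => simp
      | succ m ih =>
        have := hdrop m
        push_cast
        push_cast at ih
        linarith
    obtain ⟨n, hn⟩ := exists_nat_gt (‖x 0 - z‖^2 / (η * ε / 2))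
    have hpos : (0:ℝ) < η * ε / 2 := by positivity
    rw [div_lt_iff₀ hpos] at hn
    have := hind n
    nlinarith [sq_nonneg ‖x n - z‖, this, hn]
  have hpart1 : Tendsto (fun k => f (x k)) atTop (nhds fstar) := by
    rw [Metric.tendsto_atTop]
    intro ε hε
    obtain ⟨K, hK⟩ := hkey ε hε
    refine ⟨K, fun k hk => ?_⟩
    rw [Real.dist_eq, abs_lt]
    have h1 := hmono K k hk
    have h2 := hnotatt (x k)
    constructor <;> linarith
  refine ⟨hpart1, ?_⟩
  by_contra hnot
  rw [tendsto_atTop] at hnot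
  push_neg at hnot
  obtain ⟨b, hb⟩ := hnot
  obtain ⟨φ, hφmono, hφ⟩ := Filter.extraction_of_frequently_atTop hb
  have hmem : ∀ n, x (φ n) ∈ Metric.closedBall (0 : EuclideanSpace ℝ (Fin N)) b := by
    intro n
    simpa [Metric.mem_closedBall, dist_zero_right] using ((hφ n).le)
  obtain ⟨p, _, ψ, hψmono, hψtend⟩ := (isCompact_closedBall
    (0 : EuclideanSpace ℝ (Fin N)) b).tendsto_subseq hmem
  have h1 : Tendsto (fun n => f (x (φ (ψ n)))) atTop (nhds (f p)) :=
    (hdiff.continuous.tendsto p).comp hψtend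
  have h2 : Tendsto (fun n => f (x (φ (ψ n)))) atTop (nhds fstar) :=
    hpart1.comp ((hφmono.comp hψmono).tendsto_atTop)
  exact absurd (tendsto_nhds_unique h1 h2) (hnotatt p).ne'
end
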